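/- arXiv:1004.1314 — 2 statements merged into one kernel-verified Lean document; each statement's English description precedes it below -/
import Mathlib

section
/- Under the stated hypotheses, the new bilinear operation [u,v]₁ = [u,v] + (∂₁ + c)(u)·∂₂(v) − ∂₂(u)·(∂₁ + c)(v) (u, v ∈ A) makes A into a Lie algebra over F; that is, [·,·]₁ is antisymmetric and satisfies the Jacobi identity. -/
open scoped BigOperators

/-- Let `F` be a field of characteristic `0` and `A` a
commutative associative `F`-algebra which is a Poisson algebra for a bracket
`br` (a Lie bracket satisfying the Leibniz compatibility).  Let `d1, d2` be
commuting derivations of the associative algebra `A` such that `d2` is a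
derivation of the Lie algebra `(A, br)` and `d1` is a quasi-derivation with
constant `c`.  Then the new operation
`b1 u v = br u v + (d1 u + c•u) * d2 v - d2 u * (d1 v + c•v)`
is antisymmetric and satisfies the Jacobi identity, i.e. it makes `A` a Lie
algebra. -/
theorem twisted_bracket_is_lie
    {F A : Type*} [Field F] [CharZero F] [CommRing A] [Algebra F A]
    (br : A →ₗ[F] A →ₗ[F] A)
    (hskew : ∀ u v : A, br u v = - br v u)
    (hjac : ∀ u v w : A, br (br u v) w + br (br v w) u + br (br w u) v = 0)
    (hleib : ∀ u v w : A, br u (v * w) = br u v * w + v * br u w)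
    (d1 d2 : A →ₗ[F] A)
    (hd1 : ∀ u v : A, d1 (u * v) = d1 u * v + u * d1 v)
    (hd2 : ∀ u v : A, d2 (u * v) = d2 u * v + u * d2 v)
    (hcomm : ∀ u : A, d1 (d2 u) = d2 (d1 u))
    (hd2lie : ∀ u v : A, d2 (br u v) = br (d2 u) v + br u (d2 v))
    (c : F)
    (hd1quasi : ∀ u v : A, d1 (br u v) = br (d1 u) v + br u (d1 v) + c • br u v) :
    let b1 : A → A → A := fun u v => br u v + (d1 u + c • u) * d2 v - d2 u * (d1 v + c • v)
    (∀ u v : A, b1 u v = - b1 v u) ∧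
    (∀ u v w : A, b1 (b1 u v) w + b1 (b1 v w) u + b1 (b1 w u) v = 0) := by
  intro b1
  have hleib1 : ∀ v w u : A, br (v * w) u = v * br w u + br v u * w := by
    intro v w u
    linear_combination hskew (v * w) u - hleib u v w - v * hskew w u - w * hskew v u
  constructor
  · intro u v
    simp only [b1]
    ring_nf
    linear_combination hskew u v
  · intro u v w
    simp only [b1, map_add, map_sub, map_smul, LinearMap.add_apply, LinearMap.sub_apply,
      LinearMap.smul_apply, hd1, hd2, hcomm, hd2lie, hd1quasi, hleib, hleib1,
      mul_add, add_mul, smul_mul_assoc, mul_smul_comm, smul_add]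
    simp only [Algebra.smul_def]
    linear_combination hjac u v w
      + d2 v * hskew (d1 u) w + algebraMap F A c * (d2 v * hskew u w)
      + d2 w * hskew (d1 v) u + algebraMap F A c * (d2 w * hskew v u)
      + d2 u * hskew (d1 w) v + algebraMap F A c * (d2 u * hskew w v)
      - d1 v * hskew (d2 u) w - algebraMap F A c * (v * hskew (d2 u) w)
      - d1 w * hskew (d2 v) u - algebraMap F A c * (w * hskew (d2 v) u)
      - d1 u * hskew (d2 w) v - algebraMap F A c * (u * hskew (d2 w) v)
end

section
/- The bilinear operation [·,·] on 𝒜 defined by [u,w] = x^{ε,0}( Σ_{s=1}^{n−1} x^{σ_{2s+1},0} (∂_{2s+1}(u)∂_{2s+2}(w) − ∂_{2s+1}(w)∂_{2s+2}(u)) + φ(α,β)·u·w ) + (∂₁+1)(u)·∂₂(w) − (∂₁+1)(w)·∂₂(u), for u ∈ 𝒜_α and w ∈ 𝒜_β, extended bilinearly, is antisymmetric and satisfies the Jacobi identity, so (𝒜, [·,·]) is a Lie algebra over F. -/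
/-!
Multiplication by `x^{ε,0}` conjugates `[·,·]` into the bracket
`M(f, g) = Σ_k c_k (X_k f · Y_k g - Y_k f · X_k g) + P(f, g)`, where `(X_k, Y_k, c_k)` runs over
`(∂₁, ∂₂, x^{-ε,0})` and `(∂_{2s+1}, ∂_{2s+2}, x^{σ_{2s+1},0})`, and
`P(x^{α,i}, x^{β,j}) = φ(α, β) x^{α+β,i+j}`: indeed `∂₁ (x^{ε,0} u) = x^{ε,0} (∂₁ + 1) u`, while the
other `∂_p` commute with `x^{ε,0}`.

`M` is a Lie bracket as soon as the `X_k, Y_k` are commuting derivations, `X_m, Y_m` kill `c_k`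
for `m ≠ k`, and `P` is a skew Jacobi biderivation compatible with the `X_k, Y_k` that vanishes on
the `c_k`. In the Jacobiator, the second-order terms of the summands `(m, k)` and `(k, m)` cancel
each other; the derivatives of the coefficients only survive for `m = k`, where their cyclic
sum is a combination of determinants with two equal columns; and the terms mixing `P` with a
summand cancel by the Leibniz rule and skew-symmetry.
-/
open scoped BigOperators
namespace TwistedHamiltonian

def Jmon {n : ℕ} (J : Fin (2 * n + 2) → Bool) : AddSubmonoid (Fin (2 * n + 2) → ℕ) where
  carrier := {i | ∀ p, J p = false → i p = 0}
  add_mem' := by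
    intro a b ha hb p hp
    simp [ha p hp, hb p hp]
  zero_mem' := by
    intro p _
    rfl

structure Setup (F : Type*) [Field F] (Γ : Type*) [AddCommGroup Γ] (n : ℕ) where
  J : Fin (2 * n + 2) → Bool
  phi : Γ →+ Γ →+ F
  phiv : Fin (2 * n + 2) → Γ →+ F
  sg : Fin n → Γ
  eps : Γ

namespace Setup

variable {F : Type*} [Field F] {Γ : Type*} [AddCommGroup Γ] {n : ℕ}

abbrev A (S : Setup F Γ n) : Type _ :=
  AddMonoidAlgebra F (Γ × Jmon S.J)

noncomputable def xx (S : Setup F Γ n) (α : Γ) (i : Jmon S.J) : S.A :=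
  AddMonoidAlgebra.single (α, i) 1

def dec (S : Setup F Γ n) (p : Fin (2 * n + 2)) (i : Jmon S.J) : Jmon S.J :=
  ⟨Function.update (i : Fin (2 * n + 2) → ℕ) p ((i : Fin (2 * n + 2) → ℕ) p - 1), by
    intro q hq
    rcases eq_or_ne q p with rfl | h
    · have h0 : (i : Fin (2 * n + 2) → ℕ) q = 0 := i.2 q hq
      simp [h0]
    · rw [Function.update_of_ne h]
      exact i.2 q hq⟩

noncomputable def pd (S : Setup F Γ n) (p : Fin (2 * n + 2)) : S.A →ₗ[F] S.A :=
  (Finsupp.lsum F fun a : Γ × Jmon S.J =>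
    LinearMap.toSpanSingleton F S.A
      (S.phiv p a.1 • S.xx a.1 a.2 +
        (((a.2 : Fin (2 * n + 2) → ℕ) p : F)) • S.xx a.1 (S.dec p a.2))) ∘ₗ
    (AddMonoidAlgebra.coeffLinearEquiv F : S.A ≃ₗ[F] (Γ × Jmon S.J →₀ F)).toLinearMap

/-- The twisted Hamiltonian bracket of two basis elements. -/
noncomputable def brkBasis (S : Setup F Γ n) (a b : Γ × Jmon S.J) : S.A :=
  S.xx S.eps 0 *
      ((∑ t : Fin n,
          S.xx (S.sg t) 0 *
            (S.pd ⟨2 * t.1 + 2, by have := t.isLt; omega⟩ (S.xx a.1 a.2) *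
                S.pd ⟨2 * t.1 + 3, by have := t.isLt; omega⟩ (S.xx b.1 b.2) -
              S.pd ⟨2 * t.1 + 2, by have := t.isLt; omega⟩ (S.xx b.1 b.2) *
                S.pd ⟨2 * t.1 + 3, by have := t.isLt; omega⟩ (S.xx a.1 a.2))) +
        S.phi a.1 b.1 • (S.xx a.1 a.2 * S.xx b.1 b.2)) +
    ((S.pd ⟨0, by omega⟩ (S.xx a.1 a.2) + S.xx a.1 a.2) *
        S.pd ⟨1, by omega⟩ (S.xx b.1 b.2) -
      (S.pd ⟨0, by omega⟩ (S.xx b.1 b.2) + S.xx b.1 b.2) *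
        S.pd ⟨1, by omega⟩ (S.xx a.1 a.2))

/-- The twisted Hamiltonian bracket `[·,·]` on `𝒜`, as a bilinear map. -/
noncomputable def brk (S : Setup F Γ n) : S.A →ₗ[F] S.A →ₗ[F] S.A :=
  (Finsupp.lsum F fun a : Γ × Jmon S.J =>
    LinearMap.toSpanSingleton F (S.A →ₗ[F] S.A)
      ((Finsupp.lsum F fun b : Γ × Jmon S.J =>
        LinearMap.toSpanSingleton F S.A (S.brkBasis a b)) ∘ₗ
        (AddMonoidAlgebra.coeffLinearEquiv F : S.A ≃ₗ[F] (Γ × Jmon S.J →₀ F)).toLinearMap)) ∘ₗ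
    (AddMonoidAlgebra.coeffLinearEquiv F : S.A ≃ₗ[F] (Γ × Jmon S.J →₀ F)).toLinearMap

/-- The action of a basis element on a basis element in the module `𝒜_{ξ,f}`. -/
noncomputable def rhoBasis (S : Setup F Γ n) (ξ : Fin (2 * n + 2) → F) (f : Γ →+ F)
    (a b : Γ × Jmon S.J) : S.A :=
  S.xx S.eps 0 *
      ((∑ t : Fin n,
          S.xx (S.sg t) 0 *
            (S.pd ⟨2 * t.1 + 2, by have := t.isLt; omega⟩ (S.xx a.1 a.2) *
                (S.pd ⟨2 * t.1 + 3, by have := t.isLt; omega⟩ (S.xx b.1 b.2) +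
                  ξ ⟨2 * t.1 + 3, by have := t.isLt; omega⟩ • S.xx b.1 b.2) -
              S.pd ⟨2 * t.1 + 3, by have := t.isLt; omega⟩ (S.xx a.1 a.2) *
                (S.pd ⟨2 * t.1 + 2, by have := t.isLt; omega⟩ (S.xx b.1 b.2) +
                  ξ ⟨2 * t.1 + 2, by have := t.isLt; omega⟩ • S.xx b.1 b.2))) +
        (S.phi a.1 b.1 + f a.1) • (S.xx a.1 a.2 * S.xx b.1 b.2)) +
    ((S.pd ⟨0, by omega⟩ (S.xx a.1 a.2) + S.xx a.1 a.2) *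
        (S.pd ⟨1, by omega⟩ (S.xx b.1 b.2) + ξ ⟨1, by omega⟩ • S.xx b.1 b.2) -
      S.pd ⟨1, by omega⟩ (S.xx a.1 a.2) *
        (S.pd ⟨0, by omega⟩ (S.xx b.1 b.2) + ξ ⟨0, by omega⟩ • S.xx b.1 b.2))

/-- The action of `𝒜` on the module `𝒜_{ξ,f}`, as a bilinear map. -/
noncomputable def rho (S : Setup F Γ n) (ξ : Fin (2 * n + 2) → F) (f : Γ →+ F) :
    S.A →ₗ[F] S.A →ₗ[F] S.A :=
  (Finsupp.lsum F fun a : Γ × Jmon S.J =>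
    LinearMap.toSpanSingleton F (S.A →ₗ[F] S.A)
      ((Finsupp.lsum F fun b : Γ × Jmon S.J =>
        LinearMap.toSpanSingleton F S.A (S.rhoBasis ξ f a b)) ∘ₗ
        (AddMonoidAlgebra.coeffLinearEquiv F : S.A ≃ₗ[F] (Γ × Jmon S.J →₀ F)).toLinearMap)) ∘ₗ
    (AddMonoidAlgebra.coeffLinearEquiv F : S.A ≃ₗ[F] (Γ × Jmon S.J →₀ F)).toLinearMap

/-- The span `F x^{-ε,0}` of the central element. -/
noncomputable def C (S : Setup F Γ n) : Submodule F S.A :=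
  Submodule.span F {S.xx (-S.eps) 0}

/-- `σ = Σ_{s=1}^{n-1} σ_{2s+1} - 2ε`. -/
def sigmaEl (S : Setup F Γ n) : Γ :=
  (∑ t : Fin n, S.sg t) - 2 • S.eps

end Setup




section Poisson

variable {K R : Type*} [CommRing K] [CommRing R] [Algebra K R]

def poisson (X Y : Derivation K R R) : R →ₗ[K] R →ₗ[K] R :=
  LinearMap.mk₂ K (fun f g => X f * Y g - Y f * X g)
    (fun _ _ _ => by simp only [map_add]; ring)
    (fun _ _ _ => by simp only [Derivation.map_smul, smul_mul_assoc, smul_sub])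
    (fun _ _ _ => by simp only [map_add]; ring)
    (fun _ _ _ => by simp only [Derivation.map_smul, mul_smul_comm, smul_sub])

lemma poisson_apply (X Y : Derivation K R R) (f g : R) :
    poisson X Y f g = X f * Y g - Y f * X g := rfl

lemma poisson_swap (X Y : Derivation K R R) (f g : R) :
    poisson X Y f g = - poisson X Y g f := by
  simp only [poisson_apply]; ring

lemma poisson_mul_left (X Y : Derivation K R R) (c f g : R) :
    poisson X Y (c * f) g = c * poisson X Y f g + f * poisson X Y c g := by
  simp only [poisson_apply, Derivation.leibniz, smul_eq_mul]; ring

lemma poisson_jacobi (X Y : Derivation K R R) (hXY : ∀ a, Y (X a) = X (Y a)) (f g h : R) :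
    poisson X Y (poisson X Y f g) h + poisson X Y (poisson X Y g h) f +
      poisson X Y (poisson X Y h f) g = 0 := by
  simp only [poisson_apply, map_sub, LinearMap.sub_apply, Derivation.leibniz, smul_eq_mul, hXY]
  ring

lemma poisson_jacobi_mixed (X Y X' Y' : Derivation K R R)
    (hXX' : ∀ a, X' (X a) = X (X' a)) (hXY' : ∀ a, Y' (X a) = X (Y' a))
    (hYX' : ∀ a, X' (Y a) = Y (X' a)) (hYY' : ∀ a, Y' (Y a) = Y (Y' a)) (f g h : R) :
    (poisson X Y (poisson X' Y' f g) h + poisson X Y (poisson X' Y' g h) f +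
      poisson X Y (poisson X' Y' h f) g) +
    (poisson X' Y' (poisson X Y f g) h + poisson X' Y' (poisson X Y g h) f +
      poisson X' Y' (poisson X Y h f) g) = 0 := by
  simp only [poisson_apply, map_sub, LinearMap.sub_apply, Derivation.leibniz, smul_eq_mul, hXX',
    hXY', hYX', hYY']
  ring

lemma poisson_mul_poisson_cyclic (X Y : Derivation K R R) (c f g h : R) :
    poisson X Y f g * poisson X Y c h + poisson X Y g h * poisson X Y c f +
      poisson X Y h f * poisson X Y c g = 0 := by
  simp only [poisson_apply]; ring

lemma poisson_jacobi_mixed_bracket (X Y : Derivation K R R) (P : R →ₗ[K] R →ₗ[K] R)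
    (hPskew : ∀ f g, P f g = - P g f) (hPmul : ∀ f g h, P (f * g) h = f * P g h + g * P f h)
    (hPX : ∀ f g, X (P f g) = P (X f) g + P f (X g))
    (hPY : ∀ f g, Y (P f g) = P (Y f) g + P f (Y g)) (f g h : R) :
    (poisson X Y (P f g) h + P (poisson X Y f g) h) +
      (poisson X Y (P g h) f + P (poisson X Y g h) f) +
      (poisson X Y (P h f) g + P (poisson X Y h f) g) = 0 := by
  simp only [poisson_apply, hPX, hPY, map_sub, LinearMap.sub_apply, hPmul]
  rw [hPskew h (X f), hPskew h (Y f), hPskew f (X g), hPskew f (Y g), hPskew g (X h),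
    hPskew g (Y h)]
  ring

end Poisson

section TwistedBracket

variable {K R ι : Type*} [CommRing K] [CommRing R] [Algebra K R] [Fintype ι]
  (X Y : ι → Derivation K R R) (c : ι → R) (P : R →ₗ[K] R →ₗ[K] R)

def twistedBracket : R →ₗ[K] R →ₗ[K] R :=
  ∑ k, (poisson (X k) (Y k)).compr₂ (LinearMap.mulLeft K (c k)) + P

lemma twistedBracket_apply (f g : R) :
    twistedBracket X Y c P f g = ∑ k, c k * poisson (X k) (Y k) f g + P f g := by
  simp [twistedBracket, LinearMap.sum_apply]

variable {X Y c P}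

lemma twistedBracket_swap (hPskew : ∀ f g, P f g = - P g f) (f g : R) :
    twistedBracket X Y c P f g = - twistedBracket X Y c P g f := by
  simp only [twistedBracket_apply, poisson_swap _ _ f g, hPskew f g, mul_neg,
    Finset.sum_neg_distrib, neg_add]

lemma poisson_twistedBracket_left (m : ι) (hc : ∀ k, k ≠ m → X m (c k) = 0 ∧ Y m (c k) = 0)
    (f g h : R) :
    poisson (X m) (Y m) (twistedBracket X Y c P f g) h =
      ∑ k, c k * poisson (X m) (Y m) (poisson (X k) (Y k) f g) h +
        poisson (X m) (Y m) f g * poisson (X m) (Y m) (c m) h +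
        poisson (X m) (Y m) (P f g) h := by
  have hcross : ∑ k, poisson (X k) (Y k) f g * poisson (X m) (Y m) (c k) h =
      poisson (X m) (Y m) f g * poisson (X m) (Y m) (c m) h := by
    refine Finset.sum_eq_single_of_mem m (Finset.mem_univ m) fun k _ hk => ?_
    simp [poisson_apply, hc k hk]
  rw [twistedBracket_apply, map_add, map_sum, LinearMap.add_apply, LinearMap.sum_apply]
  simp only [poisson_mul_left, Finset.sum_add_distrib, hcross]

lemma apply_twistedBracket_left (hPmul : ∀ f g h, P (f * g) h = f * P g h + g * P f h)
    (hPc : ∀ k g, P (c k) g = 0) (f g h : R) :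
    P (twistedBracket X Y c P f g) h =
      ∑ k, c k * P (poisson (X k) (Y k) f g) h + P (P f g) h := by
  simp only [twistedBracket_apply, map_add, map_sum, LinearMap.add_apply, LinearMap.sum_apply,
    hPmul, hPc, mul_zero, add_zero]

lemma twistedBracket_twistedBracket (hc : ∀ m k, k ≠ m → X m (c k) = 0 ∧ Y m (c k) = 0)
    (hPmul : ∀ f g h, P (f * g) h = f * P g h + g * P f h) (hPc : ∀ k g, P (c k) g = 0)
    (f g h : R) :
    twistedBracket X Y c P (twistedBracket X Y c P f g) h =
      ∑ m, ∑ k, c m * (c k * poisson (X m) (Y m) (poisson (X k) (Y k) f g) h) +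
        ∑ m, c m * (poisson (X m) (Y m) f g * poisson (X m) (Y m) (c m) h) +
        ∑ m, c m * (poisson (X m) (Y m) (P f g) h + P (poisson (X m) (Y m) f g) h) +
        P (P f g) h := by
  rw [twistedBracket_apply, apply_twistedBracket_left hPmul hPc]
  simp only [poisson_twistedBracket_left _ (hc _), mul_add, Finset.mul_sum,
    Finset.sum_add_distrib]
  ring

theorem twistedBracket_jacobi (hXX : ∀ m k a, X m (X k a) = X k (X m a))
    (hXY : ∀ m k a, X m (Y k a) = Y k (X m a)) (hYY : ∀ m k a, Y m (Y k a) = Y k (Y m a))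
    (hc : ∀ m k, k ≠ m → X m (c k) = 0 ∧ Y m (c k) = 0)
    (hPskew : ∀ f g, P f g = - P g f) (hPmul : ∀ f g h, P (f * g) h = f * P g h + g * P f h)
    (hPX : ∀ m f g, X m (P f g) = P (X m f) g + P f (X m g))
    (hPY : ∀ m f g, Y m (P f g) = P (Y m f) g + P f (Y m g)) (hPc : ∀ k g, P (c k) g = 0)
    (hPjac : ∀ f g h, P (P f g) h + P (P g h) f + P (P h f) g = 0) (f g h : R) :
    twistedBracket X Y c P (twistedBracket X Y c P f g) h +
      twistedBracket X Y c P (twistedBracket X Y c P g h) f +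
      twistedBracket X Y c P (twistedBracket X Y c P h f) g = 0 := by
  have hsecond : ∑ m, ∑ k,
      (c m * (c k * poisson (X m) (Y m) (poisson (X k) (Y k) f g) h) +
        c m * (c k * poisson (X m) (Y m) (poisson (X k) (Y k) g h) f) +
        c m * (c k * poisson (X m) (Y m) (poisson (X k) (Y k) h f) g)) = 0 := by
    -- the summands for `(m, k)` and `(k, m)` cancel, and the diagonal ones vanish by Jacobi
    rw [← Finset.sum_product']
    refine Finset.sum_ninvolution Prod.swap (fun ⟨m, k⟩ => ?_) (fun ⟨m, k⟩ hne => ?_)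
      (fun _ => Finset.mem_univ _) (fun _ => rfl)
    · dsimp only [Prod.swap_prod_mk]
      linear_combination c m * c k * poisson_jacobi_mixed
        (X m) (Y m) (X k) (Y k) (hXX k m) (fun a => (hXY m k a).symm) (hXY k m) (hYY k m) f g h
    · intro hswap
      obtain rfl : m = k := congr_arg Prod.snd hswap
      exact hne (by linear_combination c m * c m *
        poisson_jacobi (X m) (Y m) (fun a => (hXY m m a).symm) f g h)
  have htwist : ∑ m, (c m * (poisson (X m) (Y m) f g * poisson (X m) (Y m) (c m) h) +
      c m * (poisson (X m) (Y m) g h * poisson (X m) (Y m) (c m) f) +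
      c m * (poisson (X m) (Y m) h f * poisson (X m) (Y m) (c m) g)) = 0 :=
    Finset.sum_eq_zero fun m _ => by
      linear_combination c m * poisson_mul_poisson_cyclic (X m) (Y m) (c m) f g h
  have hmixed : ∑ m, (c m * (poisson (X m) (Y m) (P f g) h + P (poisson (X m) (Y m) f g) h) +
      c m * (poisson (X m) (Y m) (P g h) f + P (poisson (X m) (Y m) g h) f) +
      c m * (poisson (X m) (Y m) (P h f) g + P (poisson (X m) (Y m) h f) g)) = 0 :=
    Finset.sum_eq_zero fun m _ => by
      linear_combination c m * poisson_jacobi_mixed_bracket (X m) (Y m) P hPskew hPmul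
        (hPX m) (hPY m) f g h
  simp only [Finset.sum_add_distrib] at hsecond htwist hmixed
  rw [twistedBracket_twistedBracket hc hPmul hPc, twistedBracket_twistedBracket hc hPmul hPc,
    twistedBracket_twistedBracket hc hPmul hPc]
  linear_combination hsecond + htwist + hmixed + hPjac f g h

end TwistedBracket

section Induction

variable {F G : Type*} [Semiring F]

theorem induction_linear₂ {motive : AddMonoidAlgebra F G → AddMonoidAlgebra F G → Prop}
    (zero_left : ∀ v, motive 0 v) (zero_right : ∀ u, motive u 0)
    (add_left : ∀ u u' v, motive u v → motive u' v → motive (u + u') v)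
    (add_right : ∀ u v v', motive u v → motive u v' → motive u (v + v'))
    (single : ∀ a b (c d : F),
      motive (AddMonoidAlgebra.single a c) (AddMonoidAlgebra.single b d))
    (u v : AddMonoidAlgebra F G) : motive u v := by
  induction u using AddMonoidAlgebra.induction_linear with
  | zero => exact zero_left v
  | add u u' hu hu' => exact add_left _ _ _ hu hu'
  | single a c =>
    induction v using AddMonoidAlgebra.induction_linear with
    | zero => exact zero_right _
    | add v v' hv hv' => exact add_right _ _ _ hv hv'
    | single b d => exact single a b c d

theorem induction_linear₃
    {motive : AddMonoidAlgebra F G → AddMonoidAlgebra F G → AddMonoidAlgebra F G → Prop}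
    (zero₁ : ∀ v w, motive 0 v w) (zero₂ : ∀ u w, motive u 0 w) (zero₃ : ∀ u v, motive u v 0)
    (add₁ : ∀ u u' v w, motive u v w → motive u' v w → motive (u + u') v w)
    (add₂ : ∀ u v v' w, motive u v w → motive u v' w → motive u (v + v') w)
    (add₃ : ∀ u v w w', motive u v w → motive u v w' → motive u v (w + w'))
    (single : ∀ a b e (c d r : F), motive (AddMonoidAlgebra.single a c)
      (AddMonoidAlgebra.single b d) (AddMonoidAlgebra.single e r))
    (u v w : AddMonoidAlgebra F G) : motive u v w := by
  induction u using AddMonoidAlgebra.induction_linear with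
  | zero => exact zero₁ v w
  | add u u' hu hu' => exact add₁ _ _ _ _ hu hu'
  | single a c =>
    refine induction_linear₂ (motive := fun v w => motive _ v w) (zero₂ _) (zero₃ _)
      (add₂ _) (fun v w w' => add₃ _ v w w') (fun b e d r => single a b e c d r) v w

end Induction

namespace Setup

variable {F : Type*} [Field F] {Γ : Type*} [AddCommGroup Γ] {n : ℕ} (S : Setup F Γ n)

lemma xx_mul_xx (α β : Γ) (i j : Jmon S.J) : S.xx α i * S.xx β j = S.xx (α + β) (i + j) := by
  simp [xx, AddMonoidAlgebra.single_mul_single]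

lemma xx_zero_zero : S.xx 0 0 = 1 := rfl

lemma xx_neg_mul_xx (α : Γ) : S.xx (-α) 0 * S.xx α 0 = 1 := by
  rw [xx_mul_xx, neg_add_cancel, add_zero, xx_zero_zero]

lemma single_eq_smul_xx (a : Γ × Jmon S.J) (c : F) :
    AddMonoidAlgebra.single a c = c • S.xx a.1 a.2 := by
  simp [xx, AddMonoidAlgebra.smul_single]

lemma dec_add {p : Fin (2 * n + 2)} {i : Jmon S.J} (hi : i.1 p ≠ 0) (j : Jmon S.J) :
    S.dec p (i + j) = S.dec p i + j := by
  ext q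
  by_cases hq : q = p
  · subst hq
    simp only [dec, AddSubmonoid.coe_add, Pi.add_apply, Function.update_self]
    omega
  · simp [dec, Function.update_of_ne hq]

lemma dec_add' {p : Fin (2 * n + 2)} (i : Jmon S.J) {j : Jmon S.J} (hj : j.1 p ≠ 0) :
    S.dec p (i + j) = i + S.dec p j := by
  rw [add_comm i j, S.dec_add hj, add_comm (S.dec p j)]

lemma natCast_smul_xx_dec_add (p : Fin (2 * n + 2)) (α : Γ) (i j : Jmon S.J) :
    ((i + j).1 p : F) • S.xx α (S.dec p (i + j)) =
      (i.1 p : F) • S.xx α (S.dec p i + j) + (j.1 p : F) • S.xx α (i + S.dec p j) := by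
  have hcoe : (i + j).1 p = i.1 p + j.1 p := rfl
  by_cases hi : i.1 p = 0 <;> by_cases hj : j.1 p = 0
  · simp [hcoe, hi, hj]
  · simp [hcoe, hi, S.dec_add' i hj]
  · simp [hcoe, hj, S.dec_add hi j]
  · rw [hcoe, Nat.cast_add, add_smul, ← S.dec_add hi j, ← S.dec_add' i hj]

lemma dec_apply_of_ne {p q : Fin (2 * n + 2)} (h : p ≠ q) (i : Jmon S.J) :
    (S.dec q i).1 p = i.1 p :=
  Function.update_of_ne h _ _

lemma dec_comm (p q : Fin (2 * n + 2)) (i : Jmon S.J) :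
    S.dec p (S.dec q i) = S.dec q (S.dec p i) := by
  by_cases hpq : p = q
  · rw [hpq]
  · exact Subtype.ext <| by
      simp only [dec, Function.update_of_ne hpq, Function.update_of_ne (Ne.symm hpq),
        Function.update_comm hpq]

lemma pd_xx (p : Fin (2 * n + 2)) (α : Γ) (i : Jmon S.J) :
    S.pd p (S.xx α i) = S.phiv p α • S.xx α i + (i.1 p : F) • S.xx α (S.dec p i) := by
  simp [pd, xx]

lemma pd_mul (p : Fin (2 * n + 2)) (u v : S.A) :
    S.pd p (u * v) = S.pd p u * v + u * S.pd p v := by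
  induction u, v using induction_linear₂ with
  | zero_left => simp
  | zero_right => simp
  | add_left u u' v hu hu' => simp only [add_mul, map_add, hu, hu']; abel
  | add_right u v v' hv hv' => simp only [mul_add, map_add, hv, hv']; abel
  | single a b c d =>
    rw [AddMonoidAlgebra.single_mul_single]
    simp only [single_eq_smul_xx, map_smul, pd_xx, Prod.fst_add, Prod.snd_add, smul_add,
      add_mul, mul_add, smul_mul_assoc, mul_smul_comm, xx_mul_xx, map_add,
      natCast_smul_xx_dec_add, add_smul]
    module

lemma pd_comm (p q : Fin (2 * n + 2)) (u : S.A) : S.pd p (S.pd q u) = S.pd q (S.pd p u) := by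
  by_cases hpq : p = q
  · rw [hpq]
  induction u using AddMonoidAlgebra.induction_linear with
  | zero => simp
  | add u u' hu hu' => simp only [map_add, hu, hu']
  | single a c =>
    simp only [single_eq_smul_xx, map_smul, map_add, pd_xx, smul_add,
      S.dec_apply_of_ne hpq, S.dec_apply_of_ne (Ne.symm hpq), S.dec_comm q p]
    module

noncomputable def pdDer (p : Fin (2 * n + 2)) : Derivation F S.A S.A :=
  Derivation.mk' (S.pd p) fun u v => by rw [pd_mul, smul_eq_mul, smul_eq_mul]; ring

@[simp]
lemma pdDer_apply (p : Fin (2 * n + 2)) (u : S.A) : S.pdDer p u = S.pd p u := rfl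

lemma brk_xx (a b : Γ × Jmon S.J) :
    S.brk (S.xx a.1 a.2) (S.xx b.1 b.2) = S.brkBasis a b := by
  simp [brk, xx]

lemma basis_apply_eq_xx (a : Γ × Jmon S.J) :
    AddMonoidAlgebra.basis (Γ × Jmon S.J) F a = S.xx a.1 a.2 := rfl

noncomputable def phiBracket : S.A →ₗ[F] S.A →ₗ[F] S.A :=
  (AddMonoidAlgebra.basis _ F).constr F fun a =>
    (AddMonoidAlgebra.basis _ F).constr F fun b => S.phi a.1 b.1 • (S.xx a.1 a.2 * S.xx b.1 b.2)

lemma phiBracket_xx (α β : Γ) (i j : Jmon S.J) :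
    S.phiBracket (S.xx α i) (S.xx β j) = S.phi α β • (S.xx α i * S.xx β j) := by
  simp only [phiBracket, ← S.basis_apply_eq_xx (α, i), ← S.basis_apply_eq_xx (β, j),
    Module.Basis.constr_basis]

lemma phiBracket_swap (hskew : ∀ α β : Γ, S.phi α β = - S.phi β α) (u v : S.A) :
    S.phiBracket u v = - S.phiBracket v u := by
  have h : S.phiBracket = - S.phiBracket.flip :=
    LinearMap.ext_basis (AddMonoidAlgebra.basis _ F) (AddMonoidAlgebra.basis _ F) fun a b => by
      simp only [basis_apply_eq_xx, phiBracket_xx, LinearMap.neg_apply, LinearMap.flip_apply,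
        hskew a.1, mul_comm, neg_smul]
  simpa using congr($h u v)

lemma pd_phiBracket (p : Fin (2 * n + 2)) (u v : S.A) :
    S.pd p (S.phiBracket u v) = S.phiBracket (S.pd p u) v + S.phiBracket u (S.pd p v) := by
  have h : S.phiBracket.compr₂ (S.pd p) =
      S.phiBracket ∘ₗ S.pd p + S.phiBracket.compl₂ (S.pd p) :=
    LinearMap.ext_basis (AddMonoidAlgebra.basis _ F) (AddMonoidAlgebra.basis _ F) fun a b => by
      simp only [basis_apply_eq_xx, LinearMap.compr₂_apply, LinearMap.add_apply,
        LinearMap.comp_apply, LinearMap.compl₂_apply, phiBracket_xx, pd_xx, map_add, map_smul,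
        LinearMap.smul_apply, xx_mul_xx, natCast_smul_xx_dec_add,
        smul_add, add_smul]
      module
  simpa using congr($h u v)

lemma phiBracket_mul_left (u v w : S.A) :
    S.phiBracket (u * v) w = u * S.phiBracket v w + v * S.phiBracket u w := by
  induction u, v, w using induction_linear₃ with
  | zero₁ | zero₂ | zero₃ => simp
  | add₁ u u' v w h h' | add₂ u v v' w h h' | add₃ u v w w' h h' =>
    simp only [add_mul, mul_add, map_add, LinearMap.add_apply, h, h']; abel
  | single a b e c d r =>
    rw [AddMonoidAlgebra.single_mul_single]
    simp only [single_eq_smul_xx, map_smul, LinearMap.smul_apply, phiBracket_xx,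
      Prod.fst_add, Prod.snd_add, smul_mul_assoc, mul_smul_comm, map_add,
      AddMonoidHom.add_apply]
    simp only [← xx_mul_xx, Algebra.smul_def, map_add, map_mul]
    ring

lemma phiBracket_jacobi (hskew : ∀ α β : Γ, S.phi α β = - S.phi β α) (u v w : S.A) :
    S.phiBracket (S.phiBracket u v) w + S.phiBracket (S.phiBracket v w) u +
      S.phiBracket (S.phiBracket w u) v = 0 := by
  induction u, v, w using induction_linear₃ with
  | zero₁ | zero₂ | zero₃ => simp
  | add₁ u u' v w h h' | add₂ u v v' w h h' | add₃ u v w w' h h' =>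
    simp only [map_add, LinearMap.add_apply]; linear_combination h + h'
  | single a b e c d r =>
    simp only [single_eq_smul_xx, map_smul, LinearMap.smul_apply, phiBracket_xx, xx_mul_xx,
      map_add, AddMonoidHom.add_apply]
    simp only [← xx_mul_xx, Algebra.smul_def, map_add]
    rw [hskew b.1 a.1, hskew e.1 a.1, hskew e.1 b.1, map_neg, map_neg, map_neg]
    ring

lemma phiBracket_xx_left_eq_zero {γ : Γ} (hγ : ∀ β, S.phi γ β = 0) (i : Jmon S.J)
    (v : S.A) : S.phiBracket (S.xx γ i) v = 0 := by
  have h : S.phiBracket (S.xx γ i) = 0 := (AddMonoidAlgebra.basis _ F).ext fun b => by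
    rw [basis_apply_eq_xx, phiBracket_xx, hγ, zero_smul, LinearMap.zero_apply]
  rw [h, LinearMap.zero_apply]

lemma pd_xx_zero (p : Fin (2 * n + 2)) (γ : Γ) :
    S.pd p (S.xx γ 0) = S.phiv p γ • S.xx γ 0 := by
  simpa using S.pd_xx p γ 0

lemma pd_xx_zero_mul (p : Fin (2 * n + 2)) (γ : Γ) (u : S.A) :
    S.pd p (S.xx γ 0 * u) = S.phiv p γ • (S.xx γ 0 * u) + S.xx γ 0 * S.pd p u := by
  rw [pd_mul, pd_xx_zero, smul_mul_assoc]

/-- Indices are 0-based: `none` stands for the pair `(∂₁, ∂₂)` and `some t` for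
`(∂_{2s+1}, ∂_{2s+2})` with `s = t + 1`. -/
def idxX : Option (Fin n) → Fin (2 * n + 2)
  | none => ⟨0, by omega⟩
  | some t => ⟨2 * t.1 + 2, by omega⟩

def idxY : Option (Fin n) → Fin (2 * n + 2)
  | none => ⟨1, by omega⟩
  | some t => ⟨2 * t.1 + 3, by omega⟩

def weight : Option (Fin n) → Γ
  | none => -S.eps
  | some t => S.sg t

noncomputable def conjBracket : S.A →ₗ[F] S.A →ₗ[F] S.A :=
  twistedBracket (fun k => S.pdDer (idxX k)) (fun k => S.pdDer (idxY k))
    (fun k => S.xx (S.weight k) 0) S.phiBracket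

lemma phi_weight (hσrad : ∀ t : Fin n, ∀ β : Γ, S.phi (S.sg t) β = 0)
    (hεrad : ∀ β : Γ, S.phi S.eps β = 0) (k : Option (Fin n)) (β : Γ) :
    S.phi (S.weight k) β = 0 := by
  cases k with
  | none => simp [weight, hεrad]
  | some t => exact hσrad t β

lemma phiv_weight (hσker : ∀ t : Fin n, ∀ p : Fin (2 * n + 2),
      p.1 ≠ 2 * t.1 + 2 → p.1 ≠ 2 * t.1 + 3 → S.phiv p (S.sg t) = 0)
    (hεker : ∀ p : Fin (2 * n + 2), p.1 ≠ 0 → S.phiv p S.eps = 0)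
    {m k : Option (Fin n)} (hkm : k ≠ m) :
    S.phiv (idxX m) (S.weight k) = 0 ∧ S.phiv (idxY m) (S.weight k) = 0 := by
  match m, k with
  | none, none => exact absurd rfl hkm
  | some t, none => simp [weight, idxX, idxY, hεker]
  | none, some s =>
    exact ⟨hσker s _ (by simp [idxX]) (by simp [idxX]),
      hσker s _ (by simp only [idxY]; omega) (by simp [idxY])⟩
  | some t, some s =>
    have hts : t.1 ≠ s.1 := fun h => hkm (by rw [Fin.ext h])
    exact ⟨hσker s _ (by simp only [idxX]; omega) (by simp only [idxX]; omega),
      hσker s _ (by simp only [idxY]; omega) (by simp only [idxY]; omega)⟩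

lemma conjBracket_swap (hskew : ∀ α β : Γ, S.phi α β = - S.phi β α) (f g : S.A) :
    S.conjBracket f g = - S.conjBracket g f :=
  twistedBracket_swap (S.phiBracket_swap hskew) f g

lemma conjBracket_jacobi (hskew : ∀ α β : Γ, S.phi α β = - S.phi β α)
    (hσrad : ∀ t : Fin n, ∀ β : Γ, S.phi (S.sg t) β = 0)
    (hσker : ∀ t : Fin n, ∀ p : Fin (2 * n + 2),
      p.1 ≠ 2 * t.1 + 2 → p.1 ≠ 2 * t.1 + 3 → S.phiv p (S.sg t) = 0)
    (hεrad : ∀ β : Γ, S.phi S.eps β = 0)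
    (hεker : ∀ p : Fin (2 * n + 2), p.1 ≠ 0 → S.phiv p S.eps = 0) (f g h : S.A) :
    S.conjBracket (S.conjBracket f g) h + S.conjBracket (S.conjBracket g h) f +
      S.conjBracket (S.conjBracket h f) g = 0 := by
  have hweight : ∀ m k, k ≠ m → S.pd (idxX m) (S.xx (S.weight k) 0) = 0 ∧
      S.pd (idxY m) (S.xx (S.weight k) 0) = 0 := fun m k hkm => by
    simp [pd_xx_zero, S.phiv_weight hσker hεker hkm]
  exact twistedBracket_jacobi (fun _ _ _ => S.pd_comm _ _ _) (fun _ _ _ => S.pd_comm _ _ _)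
    (fun _ _ _ => S.pd_comm _ _ _) hweight (S.phiBracket_swap hskew) S.phiBracket_mul_left
    (fun _ => S.pd_phiBracket _) (fun _ => S.pd_phiBracket _)
    (fun k => S.phiBracket_xx_left_eq_zero (S.phi_weight hσrad hεrad k) 0)
    (S.phiBracket_jacobi hskew) f g h

lemma pd_xx_eps_mul (hεker : ∀ p : Fin (2 * n + 2), p.1 ≠ 0 → S.phiv p S.eps = 0)
    {p : Fin (2 * n + 2)} (hp : p.1 ≠ 0) (u : S.A) :
    S.pd p (S.xx S.eps 0 * u) = S.xx S.eps 0 * S.pd p u := by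
  rw [pd_xx_zero_mul, hεker p hp, zero_smul, zero_add]

lemma pd_zero_xx_eps_mul (hε1 : S.phiv ⟨0, by omega⟩ S.eps = 1) (u : S.A) :
    S.pd ⟨0, by omega⟩ (S.xx S.eps 0 * u) = S.xx S.eps 0 * (S.pd ⟨0, by omega⟩ u + u) := by
  rw [pd_xx_zero_mul, hε1, one_smul, mul_add, add_comm]

lemma phiBracket_xx_eps_mul (hskew : ∀ α β : Γ, S.phi α β = - S.phi β α)
    (hεrad : ∀ β : Γ, S.phi S.eps β = 0) (u w : S.A) :
    S.phiBracket (S.xx S.eps 0 * u) (S.xx S.eps 0 * w) =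
      S.xx S.eps 0 * (S.xx S.eps 0 * S.phiBracket u w) := by
  rw [phiBracket_mul_left, S.phiBracket_xx_left_eq_zero hεrad, mul_zero, add_zero,
    S.phiBracket_swap hskew u, phiBracket_mul_left, S.phiBracket_xx_left_eq_zero hεrad, mul_zero,
    add_zero, S.phiBracket_swap hskew w]
  simp only [mul_neg, neg_neg]

lemma xx_neg_eps_mul_conjBracket (hskew : ∀ α β : Γ, S.phi α β = - S.phi β α)
    (hεrad : ∀ β : Γ, S.phi S.eps β = 0)
    (hεker : ∀ p : Fin (2 * n + 2), p.1 ≠ 0 → S.phiv p S.eps = 0)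
    (hε1 : S.phiv ⟨0, by omega⟩ S.eps = 1) (u w : S.A) :
    S.xx (-S.eps) 0 * S.conjBracket (S.xx S.eps 0 * u) (S.xx S.eps 0 * w) =
      S.xx S.eps 0 * ((∑ t : Fin n, S.xx (S.sg t) 0 *
          (S.pd ⟨2 * t.1 + 2, by omega⟩ u * S.pd ⟨2 * t.1 + 3, by omega⟩ w -
            S.pd ⟨2 * t.1 + 2, by omega⟩ w * S.pd ⟨2 * t.1 + 3, by omega⟩ u)) +
        S.phiBracket u w) +
      ((S.pd ⟨0, by omega⟩ u + u) * S.pd ⟨1, by omega⟩ w -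
        (S.pd ⟨0, by omega⟩ w + w) * S.pd ⟨1, by omega⟩ u) := by
  simp only [conjBracket, twistedBracket_apply, Fintype.sum_option, idxX, idxY, weight,
    pdDer_apply, poisson_apply, S.phiBracket_xx_eps_mul hskew hεrad, S.pd_zero_xx_eps_mul hε1,
    S.pd_xx_eps_mul hεker (p := ⟨1, _⟩) one_ne_zero]
  simp (disch := simp) only [S.pd_xx_eps_mul hεker]
  set e := S.xx S.eps 0
  set T := ∑ t : Fin n, S.xx (S.sg t) 0 *
    (S.pd ⟨2 * t.1 + 2, by omega⟩ u * S.pd ⟨2 * t.1 + 3, by omega⟩ w -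
      S.pd ⟨2 * t.1 + 2, by omega⟩ w * S.pd ⟨2 * t.1 + 3, by omega⟩ u)
  have hsum : ∑ t : Fin n, S.xx (S.sg t) 0 *
      (e * S.pd ⟨2 * t.1 + 2, by omega⟩ u * (e * S.pd ⟨2 * t.1 + 3, by omega⟩ w) -
        e * S.pd ⟨2 * t.1 + 3, by omega⟩ u * (e * S.pd ⟨2 * t.1 + 2, by omega⟩ w)) =
      e * e * T := by
    rw [Finset.mul_sum]
    exact Finset.sum_congr rfl fun t _ => by ring
  rw [hsum]
  linear_combination ((S.xx (-S.eps) 0 * e + 1) *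
      ((S.pd ⟨0, by omega⟩ u + u) * S.pd ⟨1, by omega⟩ w -
        (S.pd ⟨0, by omega⟩ w + w) * S.pd ⟨1, by omega⟩ u) + e * (T + S.phiBracket u w)) *
    S.xx_neg_mul_xx S.eps

lemma brk_eq_conjBracket (hskew : ∀ α β : Γ, S.phi α β = - S.phi β α)
    (hεrad : ∀ β : Γ, S.phi S.eps β = 0)
    (hεker : ∀ p : Fin (2 * n + 2), p.1 ≠ 0 → S.phiv p S.eps = 0)
    (hε1 : S.phiv ⟨0, by omega⟩ S.eps = 1) (u w : S.A) :
    S.brk u w = S.xx (-S.eps) 0 * S.conjBracket (S.xx S.eps 0 * u) (S.xx S.eps 0 * w) := by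
  let e := LinearMap.mulLeft F (S.xx S.eps 0)
  have h : S.brk =
      (S.conjBracket.compl₁₂ e e).compr₂ (LinearMap.mulLeft F (S.xx (-S.eps) 0)) :=
    LinearMap.ext_basis (AddMonoidAlgebra.basis _ F) (AddMonoidAlgebra.basis _ F) fun a b => by
      simp only [basis_apply_eq_xx, brk_xx, LinearMap.compr₂_apply, LinearMap.compl₁₂_apply,
        LinearMap.mulLeft_apply, e, S.xx_neg_eps_mul_conjBracket hskew hεrad hεker hε1,
        brkBasis, phiBracket_xx]
  exact congr($h u w)

end Setup

/-- The bilinear operation `[·,·]` defined on basis elements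
by (1.8) of the paper is antisymmetric and satisfies the Jacobi identity, so
`(𝒜, [·,·])` is a Lie algebra over `F`. -/
theorem brk_is_lie_bracket
    {F : Type*} [Field F] {Γ : Type*} [AddCommGroup Γ] {n : ℕ} (S : Setup F Γ n)
    (hskew : ∀ α β : Γ, S.phi α β = - S.phi β α)
    (hσrad : ∀ t : Fin n, ∀ β : Γ, S.phi (S.sg t) β = 0)
    (hσker : ∀ t : Fin n, ∀ p : Fin (2 * n + 2),
      p.1 ≠ 2 * t.1 + 2 → p.1 ≠ 2 * t.1 + 3 → S.phiv p (S.sg t) = 0)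
    (hεrad : ∀ β : Γ, S.phi S.eps β = 0)
    (hεker : ∀ p : Fin (2 * n + 2), p.1 ≠ 0 → S.phiv p S.eps = 0)
    (hε1 : S.phiv ⟨0, by omega⟩ S.eps = 1) :
    (∀ u v : S.A, S.brk u v = - S.brk v u) ∧
    (∀ u v w : S.A,
      S.brk (S.brk u v) w + S.brk (S.brk v w) u + S.brk (S.brk w u) v = 0) := by
  have hconj := S.brk_eq_conjBracket hskew hεrad hεker hε1
  have hcancel : ∀ z : S.A, S.xx S.eps 0 * (S.xx (-S.eps) 0 * z) = z := fun z => by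
    rw [← mul_assoc, mul_comm (S.xx S.eps 0), S.xx_neg_mul_xx, one_mul]
  refine ⟨fun u v => ?_, fun u v w => ?_⟩
  · rw [hconj, hconj, S.conjBracket_swap hskew, mul_neg]
  · simp only [hconj, hcancel, ← mul_add, S.conjBracket_jacobi hskew hσrad hσker hεrad hεker,
      mul_zero]

end TwistedHamiltonian
end
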